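/- arXiv:1902.03166 — 7 statements merged into one kernel-verified Lean document; each statement's English description precedes it below -/
import Mathlib

section
/- Let ℓ be a horizontal line below all pairwise intersections of lines ℓᵢ, ℓⱼ, ℓₖ, where ℓₘ meets ℓ at (xₘ, 0) and yₘ is the cotangent of the directed angle between ℓ and ℓₘ, with x_i < x_j < x_k and y_i > y_j > y_k. Then the area of the triangle formed by ℓᵢ, ℓⱼ, ℓₖ equals (xⱼ-xᵢ)²/(2(yᵢ-yⱼ)) + (xₖ-xⱼ)²/(2(yⱼ-yₖ)) + (xᵢ-xₖ)²/(2(yₖ-yᵢ)). -/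
/-- Standard Euclidean area of the triangle with vertices `p`, `q`, `r`. -/
noncomputable def triangleArea (p q r : ℝ × ℝ) : ℝ :=
  |(q.1 - p.1) * (r.2 - p.2) - (r.1 - p.1) * (q.2 - p.2)| / 2

/-- The intersection point of the lines with parameters `(x₁,y₁)` and `(x₂,y₂)`,
where the line with parameters `(x₀,y₀)` (`y₀ ≠ 0`) is `y = (x - x₀)/y₀`. -/
noncomputable def interPt (x₁ y₁ x₂ y₂ : ℝ) : ℝ × ℝ :=
  ((x₂ * y₁ - x₁ * y₂) / (y₁ - y₂), (x₂ - x₁) / (y₁ - y₂))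

/-- Let `ℓ` be the x-axis, lying below all pairwise intersections of the lines
`ℓᵢ, ℓⱼ, ℓₖ`, where `ℓₘ` meets `ℓ` at `(xₘ, 0)` with cotangent parameter `yₘ`,
`x_i < x_j < x_k` and `y_i > y_j > y_k`.  Then the area of the triangle formed
by `ℓᵢ, ℓⱼ, ℓₖ` is
`(xⱼ-xᵢ)²/(2(yᵢ-yⱼ)) + (xₖ-xⱼ)²/(2(yⱼ-yₖ)) + (xᵢ-xₖ)²/(2(yₖ-yᵢ))`. -/
theorem stmt2 (xi xj xk yi yj yk : ℝ)
    (hyi : yi ≠ 0) (hyj : yj ≠ 0) (hyk : yk ≠ 0)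
    (hx1 : xi < xj) (hx2 : xj < xk) (hy1 : yj < yi) (hy2 : yk < yj) :
    triangleArea (interPt xi yi xj yj) (interPt xi yi xk yk) (interPt xj yj xk yk) =
      (xj - xi) ^ 2 / (2 * (yi - yj)) + (xk - xj) ^ 2 / (2 * (yj - yk)) +
        (xi - xk) ^ 2 / (2 * (yk - yi)) := by
  have p : (0:ℝ) < yi - yj := by linarith
  have q : (0:ℝ) < yj - yk := by linarith
  have r : (0:ℝ) < yi - yk := by linarith
  have hrhs : (xj - xi) ^ 2 / (2 * (yi - yj)) + (xk - xj) ^ 2 / (2 * (yj - yk)) +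
        (xi - xk) ^ 2 / (2 * (yk - yi))
      = ((xj - xi) * (yj - yk) - (xk - xj) * (yi - yj)) ^ 2 /
          (2 * ((yi - yj) * ((yj - yk) * (yi - yk)))) := by
    have h1 : yi - yj ≠ 0 := p.ne'
    have h2 : yj - yk ≠ 0 := q.ne'
    have h4 : yk - yi ≠ 0 := fun h => r.ne' (by linarith)
    field_simp
    ring
  rw [hrhs]
  simp only [triangleArea, interPt]
  have hb : (0:ℝ) ≤ ((xj - xi) * (yj - yk) - (xk - xj) * (yi - yj)) ^ 2 /
      (2 * ((yi - yj) * ((yj - yk) * (yi - yk)))) * 2 :=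
    mul_nonneg (div_nonneg (sq_nonneg _) (by positivity)) (by norm_num)
  rw [div_eq_iff (by norm_num : (2:ℝ) ≠ 0), abs_eq hb]
  left
  field_simp
  ring
end

section
/- For any n ≥ 3, there exists an arrangement of n lines in the plane in which the number of triangles of minimum (equivalently, after scaling, unit) area is at least ⌊(n² - n)/6⌋; in particular the maximum number of unit-area triangles determined by n lines is Ω(n²). -/
open scoped Classical

/-- A line in the plane given by the equation `a·x + b·y = c` with `(a,b) ≠ (0,0)`. -/
structure Line where
  a : ℝ
  b : ℝ
  c : ℝ
  hab : (a, b) ≠ (0, 0)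

namespace Line

/-- The set of points of a line. -/
def pts (L : Line) : Set (ℝ × ℝ) := {p | L.a * p.1 + L.b * p.2 = L.c}

/-- The determinant of the directions of two lines. -/
def lineDet (L M : Line) : ℝ := L.a * M.b - L.b * M.a

/-- Two lines are parallel (possibly equal) when their directions are proportional. -/
def Parallel (L M : Line) : Prop := lineDet L M = 0

/-- The intersection point of two non-parallel lines. -/
noncomputable def inter (L M : Line) : ℝ × ℝ :=
  ((L.c * M.b - M.c * L.b) / lineDet L M, (L.a * M.c - M.a * L.c) / lineDet L M)

end Line

/-- The area of the triangle determined by three (pairwise non-parallel) lines. -/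
noncomputable def triArea (L M N : Line) : ℝ :=
  triangleArea (Line.inter L M) (Line.inter L N) (Line.inter M N)

/-- Three lines form a (non-degenerate) triangle when they are pairwise
non-parallel and not concurrent. -/
def FormsTriangle (L M N : Line) : Prop :=
  ¬ Line.Parallel L M ∧ ¬ Line.Parallel L N ∧ ¬ Line.Parallel M N ∧
    Line.inter L M ∉ N.pts

/-- The open region bounded by the triangle formed by three lines: the interior
of the convex hull of the three pairwise intersection points. -/
noncomputable def openTriangle (L M N : Line) : Set (ℝ × ℝ) :=
  interior (convexHull ℝ {Line.inter L M, Line.inter L N, Line.inter M N})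

/-!
Take the lines `x = m`, `y = j` and `x + y = k + z - 1/2` with `m, j, k` integers in suitable
ranges. Two lines of the same family are parallel, so a triangle uses one line of each family; it
is then a right isosceles triangle of area `(k + z - 1/2 - m - j)² / 2 ≥ 1/8`, with equality
exactly when `k + z - m - j ∈ {0, 1}` (the two orientations of the cells of a triangular grid).
With `z + w` vertical lines `x = 0, …, z + w - 1` and `q` lines in each other family, the
vertical line `x = z + e` or `x = z - 1 - e` meets `(q - e) + (q - e - 1)` minimal triangles, so
there are `2q(z + w) - z² - w²` of them. Taking `q ≈ n/3` and `z ≈ w ≈ n/6` makes this at least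
`⌊(n² - n)/6⌋`.
-/

namespace Line

def vert (s : ℝ) : Line := ⟨1, 0, s, by simp⟩

def horiz (t : ℝ) : Line := ⟨0, 1, t, by simp⟩

def diag (u : ℝ) : Line := ⟨1, 1, u, by simp⟩

theorem parallel_vert (s t : ℝ) : (vert s).Parallel (vert t) := by
  simp [Parallel, lineDet, vert]

theorem parallel_horiz (s t : ℝ) : (horiz s).Parallel (horiz t) := by
  simp [Parallel, lineDet, horiz]

theorem parallel_diag (s t : ℝ) : (diag s).Parallel (diag t) := by
  simp [Parallel, lineDet, diag]

theorem inter_comm (L M : Line) : L.inter M = M.inter L := by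
  simp only [inter, lineDet, Prod.mk.injEq]
  constructor <;> rw [← neg_div_neg_eq] <;> ring_nf

end Line

open Line

theorem triangleArea_swap_left (p q r : ℝ × ℝ) : triangleArea p q r = triangleArea q p r := by
  unfold triangleArea
  rw [← abs_neg]
  ring_nf

theorem triangleArea_swap_right (p q r : ℝ × ℝ) : triangleArea p q r = triangleArea p r q := by
  unfold triangleArea
  rw [← abs_neg]
  ring_nf

theorem triArea_swap_left (L M N : Line) : triArea L M N = triArea M L N := by
  rw [triArea, triArea, inter_comm M L, triangleArea_swap_right]

theorem triArea_swap_right (L M N : Line) : triArea L M N = triArea L N M := by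
  rw [triArea, triArea, inter_comm N M, triangleArea_swap_left]

theorem triArea_vert_horiz_diag (s t u : ℝ) :
    triArea (vert s) (horiz t) (diag u) = (u - s - t) ^ 2 / 2 := by
  simp only [triArea, triangleArea, inter, lineDet, vert, horiz, diag]
  rw [← abs_of_nonneg (sq_nonneg (u - s - t)), ← abs_neg]
  congr 2
  ring

theorem formsTriangle_vert_horiz_diag {s t u : ℝ} (h : s + t ≠ u) :
    FormsTriangle (vert s) (horiz t) (diag u) := by
  refine ⟨?_, ?_, ?_, ?_⟩ <;> simp [Parallel, lineDet, vert, horiz, diag, inter, pts, h]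

def IsGridLine (L : Line) : Prop :=
  (∃ i : ℤ, L = vert i) ∨ (∃ j : ℤ, L = horiz j) ∨ ∃ k : ℤ, L = diag (k + 1 / 2)

theorem one_eighth_le_sq_div_two (i j k : ℤ) : 1 / 8 ≤ ((k : ℝ) + 1 / 2 - i - j) ^ 2 / 2 := by
  have : (0 : ℝ) ≤ (k - i - j) * (k - i - j + 1) := by
    exact_mod_cast (show (0 : ℤ) ≤ (k - i - j) * (k - i - j + 1) by
      rcases le_or_gt 0 (k - i - j) with h | h <;> nlinarith)
  nlinarith

theorem one_eighth_le_triArea {L M N : Line} (hL : IsGridLine L) (hM : IsGridLine M)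
    (hN : IsGridLine N) (h : FormsTriangle L M N) : 1 / 8 ≤ triArea L M N := by
  rcases hL with ⟨i, rfl⟩ | ⟨i, rfl⟩ | ⟨i, rfl⟩ <;>
  rcases hM with ⟨j, rfl⟩ | ⟨j, rfl⟩ | ⟨j, rfl⟩ <;>
  rcases hN with ⟨k, rfl⟩ | ⟨k, rfl⟩ | ⟨k, rfl⟩ <;>
  simp only [FormsTriangle, parallel_vert, parallel_horiz, parallel_diag, not_true_eq_false,
    false_and, and_false] at h
  all_goals
    first
    | rw [triArea_vert_horiz_diag]
    | rw [triArea_swap_left, triArea_vert_horiz_diag]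
    | rw [triArea_swap_right, triArea_vert_horiz_diag]
    | rw [triArea_swap_left, triArea_swap_right, triArea_vert_horiz_diag]
    | rw [triArea_swap_right, triArea_swap_left, triArea_vert_horiz_diag]
    | rw [triArea_swap_left, triArea_swap_right, triArea_swap_left, triArea_vert_horiz_diag]
    exact one_eighth_le_sq_div_two ..

section Grid

variable (z w q : ℕ)

noncomputable def gridLine (m : ℕ) : Line :=
  if m < z + w then vert m
  else if m < z + w + q then horiz (m - (z + w) : ℕ)
  else diag ((m - (z + w + q) + z : ℕ) - 1 / 2)

theorem gridLine_injective : Function.Injective (gridLine z w q) := by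
  intro m m' h
  unfold gridLine at h
  split_ifs at h <;> simp [vert, horiz, diag] at h <;> omega

theorem isGridLine_gridLine (m : ℕ) : IsGridLine (gridLine z w q m) := by
  unfold gridLine
  split_ifs
  · exact Or.inl ⟨m, by simp⟩
  · exact Or.inr (Or.inl ⟨(m - (z + w) : ℕ), by simp⟩)
  · refine Or.inr (Or.inr ⟨(m - (z + w + q) + z : ℕ) - 1, ?_⟩)
    push_cast
    ring_nf

theorem gridLine_of_lt {m : ℕ} (h : m < z + w) : gridLine z w q m = vert m := by
  simp [gridLine, h]

theorem gridLine_add_of_lt {j : ℕ} (h : j < q) : gridLine z w q (z + w + j) = horiz j := by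
  simp [gridLine, h]

theorem gridLine_add_add (k : ℕ) :
    gridLine z w q (z + w + q + k) = diag ((k + z : ℕ) - 1 / 2) := by
  simp [gridLine, add_assoc]

end Grid

open Finset

theorem card_filter_eq_add (q d : ℕ) : #{p ∈ range q ×ˢ range q | p.2 = p.1 + d} = q - d := by
  rw [← card_range (q - d)]
  refine card_nbij' Prod.fst (fun j => (j, j + d)) ?_ ?_ ?_ ?_ <;> intro p hp <;>
    simp only [coe_filter, coe_range, Set.mem_ofPred_eq, Set.mem_Iio, mem_product, mem_range,
      Prod.ext_iff, true_and, and_true] at hp ⊢ <;> omega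

theorem card_filter_eq_add_or_eq_add_succ (q d : ℕ) :
    #{p ∈ range q ×ˢ range q | p.2 = p.1 + d ∨ p.2 = p.1 + (d + 1)} = (q - d) + (q - (d + 1)) := by
  rw [filter_or, card_union_of_disjoint, card_filter_eq_add, card_filter_eq_add]
  exact disjoint_filter.2 fun _ _ h => by omega

theorem card_filter_swap {α β : Type*} (s : Finset α) (t : Finset β) (P : α × β → Prop)
    [DecidablePred P] : #{p ∈ t ×ˢ s | P p.swap} = #{p ∈ s ×ˢ t | P p} :=
  card_equiv (Equiv.prodComm β α) (by simp [and_comm])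

theorem sum_range_sub_add_sub_succ {q w : ℕ} (hw : w ≤ q) :
    ∑ e ∈ range w, ((q - e) + (q - (e + 1))) + w ^ 2 = 2 * q * w := by
  induction w with
  | zero => simp
  | succ w ih =>
    rw [sum_range_succ, show (w + 1) ^ 2 = w ^ 2 + 2 * w + 1 by ring,
      show 2 * q * (w + 1) = 2 * q * w + 2 * q by ring, ← ih (by omega)]
    omega

section Counting

variable (z w q : ℕ)

def minAreaTriples : Finset (ℕ × ℕ × ℕ) :=
  {t ∈ range (z + w) ×ˢ range q ×ˢ range q |
    t.1 + t.2.1 = t.2.2 + z ∨ t.1 + t.2.1 + 1 = t.2.2 + z}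

theorem card_minAreaTriples_eq_sum : #(minAreaTriples z w q) = ∑ m ∈ range (z + w),
    #{p ∈ range q ×ˢ range q | m + p.1 = p.2 + z ∨ m + p.1 + 1 = p.2 + z} := by
  simp only [minAreaTriples, card_filter, sum_product]

theorem card_fiber_add (e : ℕ) :
    #{p ∈ range q ×ˢ range q | z + e + p.1 = p.2 + z ∨ z + e + p.1 + 1 = p.2 + z} =
      (q - e) + (q - (e + 1)) := by
  rw [← card_filter_eq_add_or_eq_add_succ]
  congr 1
  exact filter_congr fun _ _ => by omega

theorem card_fiber_sub {e : ℕ} (he : e < z) :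
    #{p ∈ range q ×ˢ range q | z - 1 - e + p.1 = p.2 + z ∨ z - 1 - e + p.1 + 1 = p.2 + z} =
      (q - e) + (q - (e + 1)) := by
  rw [← card_filter_eq_add_or_eq_add_succ, ← card_filter_swap]
  congr 1
  exact filter_congr fun _ _ => by simp only [Prod.fst_swap, Prod.snd_swap]; omega

theorem card_minAreaTriples {z w q : ℕ} (hz : z ≤ q) (hw : w ≤ q) :
    #(minAreaTriples z w q) + z ^ 2 + w ^ 2 = 2 * q * (z + w) := by
  rw [card_minAreaTriples_eq_sum, sum_range_add, ← sum_range_reflect,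
    sum_congr rfl fun e he => card_fiber_sub z q (mem_range.1 he),
    sum_congr rfl fun e _ => card_fiber_add z q e, mul_add, ← sum_range_sub_add_sub_succ hz,
    ← sum_range_sub_add_sub_succ hw]
  ring

end Counting

theorem formsTriangle_gridLine_of_mem {z w q : ℕ} {t : ℕ × ℕ × ℕ}
    (ht : t ∈ minAreaTriples z w q) :
    FormsTriangle (gridLine z w q t.1) (gridLine z w q (z + w + t.2.1))
        (gridLine z w q (z + w + q + t.2.2)) ∧
      triArea (gridLine z w q t.1) (gridLine z w q (z + w + t.2.1))
        (gridLine z w q (z + w + q + t.2.2)) = 1 / 8 := by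
  obtain ⟨⟨m, j, k⟩, hmem, hsum⟩ := t, mem_filter.1 ht
  simp only [mem_product, mem_range] at hmem
  rw [gridLine_of_lt z w q hmem.1, gridLine_add_of_lt z w q hmem.2.1, gridLine_add_add]
  have hgap : (((k + z : ℕ) : ℝ) - 1 / 2 - m - j) ^ 2 = 1 / 4 := by
    rcases hsum with h | h <;> rw [← h] <;> push_cast <;> ring
  refine ⟨formsTriangle_vert_horiz_diag fun h => ?_, ?_⟩
  · rw [show ((k + z : ℕ) : ℝ) - 1 / 2 - m - j = 0 by linarith] at hgap
    norm_num at hgap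
  · rw [triArea_vert_horiz_diag, hgap]
    norm_num

theorem card_minAreaTriples_le {z w q n : ℕ} [NeZero n] (hn : z + w + 2 * q = n) :
    #(minAreaTriples z w q) ≤
      (univ.filter fun t : Fin n × Fin n × Fin n =>
        t.1 < t.2.1 ∧ t.2.1 < t.2.2 ∧
        FormsTriangle (gridLine z w q t.1) (gridLine z w q t.2.1) (gridLine z w q t.2.2) ∧
        triArea (gridLine z w q t.1) (gridLine z w q t.2.1) (gridLine z w q t.2.2) =
          1 / 8).card := by
  have hval {m : ℕ} (hm : m < n) : (Fin.ofNat n m : ℕ) = m := Nat.mod_eq_of_lt hm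
  have hbounds {t : ℕ × ℕ × ℕ} (ht : t ∈ minAreaTriples z w q) :
      t.1 < z + w ∧ t.2.1 < q ∧ t.2.2 < q := by
    simpa only [mem_product, mem_range] using (mem_filter.1 ht).1
  refine card_le_card_of_injOn (fun t => (Fin.ofNat n t.1, Fin.ofNat n (z + w + t.2.1),
    Fin.ofNat n (z + w + q + t.2.2))) (fun t ht => ?_)
    (Set.LeftInvOn.injOn (f₁' := fun u => (u.1, u.2.1 - (z + w), u.2.2 - (z + w + q)))
      fun t ht => ?_) <;>
    have := hbounds ht <;>
    simp only [coe_filter, mem_univ, Set.mem_ofPred_eq, Fin.lt_def, Prod.ext_iff, true_and,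
      hval (show t.1 < n by omega), hval (show z + w + t.2.1 < n by omega),
      hval (show z + w + q + t.2.2 < n by omega)]
  · exact ⟨by omega, by omega, formsTriangle_gridLine_of_mem ht⟩
  · omega

theorem exists_grid_dimensions {n : ℕ} (hn : 3 ≤ n) :
    ∃ z w q : ℕ, z + w + 2 * q = n ∧ z ≤ q ∧ w ≤ q ∧
      (n ^ 2 - n) / 6 + z ^ 2 + w ^ 2 ≤ 2 * q * (z + w) := by
  obtain ⟨q, r, hr, hq⟩ : ∃ q r, r < 3 ∧ n + 1 = 3 * q + r :=
    ⟨(n + 1) / 3, (n + 1) % 3, Nat.mod_lt _ (by norm_num), (Nat.div_add_mod _ _).symm⟩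
  obtain ⟨z, f, hf, hz⟩ : ∃ z f, f < 2 ∧ q + r - 1 = 2 * z + f :=
    ⟨(q + r - 1) / 2, (q + r - 1) % 2, Nat.mod_lt _ (by norm_num), (Nat.div_add_mod _ _).symm⟩
  refine ⟨z, z + f, q, by omega, by omega, by omega, ?_⟩
  suffices h : (n : ℤ) ^ 2 - n + 6 * (z ^ 2 + (z + f) ^ 2) ≤ 6 * (2 * q * (z + (z + f))) + 5 by
    have h' : n ^ 2 - n + 6 * (z ^ 2 + (z + f) ^ 2) ≤ 6 * (2 * q * (z + (z + f))) + 5 := by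
      have : n ≤ n ^ 2 := Nat.le_self_pow two_ne_zero n
      zify [this]
      exact h
    omega
  have hn' : (n : ℤ) = 2 * q + (2 * z + f) := by omega
  have hqa : ((q : ℤ) - (2 * z + f)) ^ 2 ≤ 1 := by
    have : (q : ℤ) - (2 * z + f) = 1 - r := by omega
    rw [this]
    interval_cases r <;> norm_num
  have hf' : (f : ℤ) ^ 2 ≤ 1 := by interval_cases f <;> norm_num
  rw [hn']
  nlinarith

/-- For every `n ≥ 3` there is an arrangement of `n` distinct lines in the plane
and a (positive) value `a` which is the minimum area among all triangles of the
arrangement, such that at least `⌊(n² - n)/6⌋` triples of the lines form a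
triangle of area exactly `a`.  In particular (rescaling so that `a = 1`) the
maximum number of unit-area triangles determined by `n` lines is `Ω(n²)`. -/
theorem stmt3 (n : ℕ) (hn : 3 ≤ n) :
    ∃ L : Fin n → Line, Function.Injective L ∧
      ∃ a : ℝ, 0 < a ∧
        (∀ i j k : Fin n, FormsTriangle (L i) (L j) (L k) →
          a ≤ triArea (L i) (L j) (L k)) ∧
        (n ^ 2 - n) / 6 ≤
          (Finset.univ.filter (fun t : Fin n × Fin n × Fin n =>
            t.1 < t.2.1 ∧ t.2.1 < t.2.2 ∧
            FormsTriangle (L t.1) (L t.2.1) (L t.2.2) ∧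
            triArea (L t.1) (L t.2.1) (L t.2.2) = a)).card := by
  obtain ⟨z, w, q, hsize, hz, hw, hcount⟩ := exists_grid_dimensions hn
  have : NeZero n := ⟨by omega⟩
  refine ⟨fun i => gridLine z w q i, (gridLine_injective z w q).comp Fin.val_injective, 1 / 8,
    by norm_num, fun i j k h => one_eighth_le_triArea (isGridLine_gridLine ..)
      (isGridLine_gridLine ..) (isGridLine_gridLine ..) h, ?_⟩
  calc (n ^ 2 - n) / 6 ≤ #(minAreaTriples z w q) := by
        have := card_minAreaTriples hz hw
        omega
    _ ≤ _ := card_minAreaTriples_le hsize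
end

section
/- In an arrangement of n lines, every triangle of minimum area is a face of the arrangement; that is, no line of the arrangement intersects the interior of a minimum-area triangle. -/
open scoped Classical

/-!
The equation of a line `m` through an interior point `x` of the triangle is a nonconstant affine
function vanishing at `x`; such a function is an open map, so `0` lies in the interior of the
convex hull of its values at the three vertices, and these values take both signs. Hence `m`
separates some vertex `V` from the other two, `A` and `B`, and is not the line `AB`. Then `m` meets
the sides `VA` and `VB` at parameters `s, t ∈ (0, 1]`, not both `1`, and cuts off a triangle of the
arrangement of area `s t` times the original one.
-/

namespace Line

def eval (L : Line) : ℝ × ℝ →ᵃ[ℝ] ℝ where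
  toFun p := L.a * p.1 + L.b * p.2 - L.c
  linear := L.a • LinearMap.fst ℝ ℝ ℝ + L.b • LinearMap.snd ℝ ℝ ℝ
  map_vadd' p v := by
    simp only [vadd_eq_add, Prod.fst_add, Prod.snd_add, LinearMap.add_apply, LinearMap.smul_apply,
      LinearMap.fst_apply, smul_eq_mul, LinearMap.snd_apply]
    ring

@[simp]
theorem eval_apply (L : Line) (p : ℝ × ℝ) : L.eval p = L.a * p.1 + L.b * p.2 - L.c := rfl

theorem mem_pts_iff {L : Line} {p : ℝ × ℝ} : p ∈ L.pts ↔ L.eval p = 0 := by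
  simp [pts, sub_eq_zero]

theorem a_ne_zero_or_b_ne_zero (L : Line) : L.a ≠ 0 ∨ L.b ≠ 0 := by
  by_contra! h
  exact L.hab (by simp [h.1, h.2])

theorem isOpenMap_eval (L : Line) : IsOpenMap L.eval := by
  refine AffineMap.isOpenMap_linear_iff.mp
    (LinearMap.isOpenMap_of_finiteDimensional _ fun r => ?_)
  have hab : L.a ^ 2 + L.b ^ 2 ≠ 0 := by
    rcases L.a_ne_zero_or_b_ne_zero with h | h <;> positivity
  refine ⟨(r / (L.a ^ 2 + L.b ^ 2)) • (L.a, L.b), ?_⟩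
  change L.a * _ + L.b * _ = r
  simp only [Prod.smul_mk, smul_eq_mul, LinearMap.fst_apply, LinearMap.snd_apply]
  field_simp

theorem eval_inter_left {L M : Line} (h : ¬ L.Parallel M) : L.eval (inter L M) = 0 := by
  rw [Parallel] at h
  simp only [inter, eval_apply]
  field_simp
  simp only [lineDet]
  ring

theorem eval_inter_right {L M : Line} (h : ¬ L.Parallel M) : M.eval (inter L M) = 0 := by
  rw [Parallel] at h
  simp only [inter, eval_apply]
  field_simp
  simp only [lineDet]
  ring

theorem eq_inter_of_eval_eq_zero {L M : Line} (h : ¬ L.Parallel M) {p : ℝ × ℝ}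
    (hL : L.eval p = 0) (hM : M.eval p = 0) : p = inter L M := by
  rw [Parallel] at h
  rw [eval_apply] at hL hM
  ext
  · rw [inter, eq_div_iff h, lineDet]; linear_combination M.b * hL - L.b * hM
  · rw [inter, eq_div_iff h, lineDet]; linear_combination L.a * hM - M.a * hL

theorem Parallel.eval_eq {L M : Line} (h : L.Parallel M) {p q : ℝ × ℝ}
    (hp : L.eval p = 0) (hq : L.eval q = 0) : M.eval p = M.eval q := by
  rw [Parallel, lineDet] at h
  rw [eval_apply] at hp hq
  rw [← sub_eq_zero, eval_apply, eval_apply]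
  rcases L.a_ne_zero_or_b_ne_zero with ha | hb
  · refine (mul_eq_zero.mp ?_).resolve_left ha
    linear_combination M.a * (hp - hq) + (p.2 - q.2) * h
  · refine (mul_eq_zero.mp ?_).resolve_left hb
    linear_combination M.b * (hp - hq) - (p.1 - q.1) * h

end Line

theorem triangleArea_swap (p q r : ℝ × ℝ) : triangleArea q p r = triangleArea p q r := by
  rw [triangleArea, triangleArea, ← abs_neg]
  ring_nf

theorem triangleArea_rotate (p q r : ℝ × ℝ) : triangleArea r p q = triangleArea p q r := by
  rw [triangleArea, triangleArea]
  ring_nf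

theorem triangleArea_lineMap_lineMap (p q r : ℝ × ℝ) (s t : ℝ) :
    triangleArea p (AffineMap.lineMap p q s) (AffineMap.lineMap p r t) =
      |s * t| * triangleArea p q r := by
  simp only [triangleArea, AffineMap.lineMap_apply_module', Prod.fst_add, Prod.snd_add,
    Prod.smul_fst, Prod.smul_snd, Prod.fst_sub, Prod.snd_sub, smul_eq_mul]
  rw [mul_div_assoc', ← abs_mul]
  ring_nf

theorem FormsTriangle.triArea_pos {L M N : Line} (h : FormsTriangle L M N) :
    0 < triArea L M N := by
  obtain ⟨hLM, hLN, hMN, hN⟩ := h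
  rw [Line.mem_pts_iff] at hN
  rw [Line.Parallel] at hLM hLN hMN
  have key : (((L.inter N).1 - (L.inter M).1) * ((M.inter N).2 - (L.inter M).2) -
      ((M.inter N).1 - (L.inter M).1) * ((L.inter N).2 - (L.inter M).2)) *
      (L.lineDet N * M.lineDet N) = N.eval (L.inter M) ^ 2 * L.lineDet M := by
    simp only [Line.inter, Line.eval_apply]
    field_simp
    simp only [Line.lineDet]
    ring
  refine half_pos (abs_pos.mpr fun h0 => ?_)
  rw [h0, zero_mul] at key
  exact mul_ne_zero (pow_ne_zero 2 hN) hLM key.symm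

theorem abs_div_sub_le_one {u w : ℝ} (h : u * w ≤ 0) : |u / (u - w)| ≤ 1 := by
  rw [abs_div]
  exact div_le_one_of_le₀ (sq_le_sq.mp (by nlinarith)) (abs_nonneg _)

theorem abs_div_sub_lt_one {u w : ℝ} (h : u * w < 0) : |u / (u - w)| < 1 := by
  have key : |u| < |u - w| := sq_lt_sq.mp (by nlinarith [sq_nonneg w])
  rw [abs_div, div_lt_one ((abs_nonneg u).trans_lt key)]
  exact key

theorem exists_neg_and_exists_pos_of_zero_mem_interior_convexHull {s : Set ℝ}
    (h : 0 ∈ interior (convexHull ℝ s)) : (∃ u ∈ s, u < 0) ∧ ∃ u ∈ s, 0 < u := by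
  constructor
  · by_contra! hs
    have hsub : convexHull ℝ s ⊆ Set.Ici 0 := convexHull_min hs (convex_Ici 0)
    simpa using interior_mono hsub h
  · by_contra! hs
    have hsub : convexHull ℝ s ⊆ Set.Iic 0 := convexHull_min hs (convex_Iic 0)
    simpa using interior_mono hsub h

namespace Line

/-- `m` weakly separates the vertex `V` from `A` and `B`, and is not the line `AB`. -/
def CutsOff (m : Line) (V A B : ℝ × ℝ) : Prop :=
  m.eval V * m.eval A ≤ 0 ∧ m.eval V * m.eval B ≤ 0 ∧
    (m.eval V * m.eval A < 0 ∨ m.eval V * m.eval B < 0)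

theorem cutsOff_of_mem_interior_convexHull (m : Line) {P Q R x : ℝ × ℝ}
    (hx : x ∈ interior (convexHull ℝ {P, Q, R})) (hxm : m.eval x = 0) :
    m.CutsOff P Q R ∨ m.CutsOff Q P R ∨ m.CutsOff R P Q := by
  have h0 : (0 : ℝ) ∈ interior (convexHull ℝ (m.eval '' {P, Q, R})) := by
    rw [← AffineMap.image_convexHull, ← hxm]
    exact m.isOpenMap_eval.image_interior_subset _ ⟨x, hx, rfl⟩
  obtain ⟨⟨u, hu, hneg⟩, v, hv, hpos⟩ :=
    exists_neg_and_exists_pos_of_zero_mem_interior_convexHull h0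
  simp only [Set.image_insert_eq, Set.image_singleton, Set.mem_insert_iff,
    Set.mem_singleton_iff] at hu hv
  simp only [CutsOff, mul_neg_iff, mul_nonpos_iff]
  grind

theorem inter_eq_lineMap {L m : Line} {V A : ℝ × ℝ} (hV : L.eval V = 0) (hA : L.eval A = 0)
    (hmV : m.eval V ≠ 0) (hVA : m.eval V * m.eval A ≤ 0) :
    ¬ L.Parallel m ∧ inter L m = AffineMap.lineMap V A (m.eval V / (m.eval V - m.eval A)) := by
  have hsub : m.eval V - m.eval A ≠ 0 := by
    intro h
    rw [← sub_eq_zero.mp h] at hVA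
    exact hmV (mul_self_eq_zero.mp (le_antisymm hVA (mul_self_nonneg _)))
  have hpar : ¬ L.Parallel m := fun h => hsub (sub_eq_zero.mpr (h.eval_eq hV hA))
  refine ⟨hpar, (eq_inter_of_eval_eq_zero hpar ?_ ?_).symm⟩
  · rw [AffineMap.apply_lineMap, hV, hA, AffineMap.lineMap_same_apply]
  · rw [AffineMap.apply_lineMap, AffineMap.lineMap_apply_module, smul_eq_mul, smul_eq_mul]
    field_simp
    ring

theorem triArea_lt_of_cutsOff {La Lb m : Line} (hab : ¬ La.Parallel Lb) {A B : ℝ × ℝ}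
    (hA : La.eval A = 0) (hB : Lb.eval B = 0) (harea : 0 < triangleArea (inter La Lb) A B)
    (hcut : m.CutsOff (inter La Lb) A B) :
    FormsTriangle La Lb m ∧ triArea La Lb m < triangleArea (inter La Lb) A B := by
  obtain ⟨hVA, hVB, hstrict⟩ := hcut
  have hV : m.eval (inter La Lb) ≠ 0 := by
    intro h
    simp [h] at hstrict
  obtain ⟨hAm, hX⟩ := inter_eq_lineMap (eval_inter_left hab) hA hV hVA
  obtain ⟨hBm, hY⟩ := inter_eq_lineMap (eval_inter_right hab) hB hV hVB
  refine ⟨⟨hab, hAm, hBm, fun h => hV (mem_pts_iff.mp h)⟩, ?_⟩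
  have hst : |m.eval (inter La Lb) / (m.eval (inter La Lb) - m.eval A) *
      (m.eval (inter La Lb) / (m.eval (inter La Lb) - m.eval B))| < 1 := by
    rw [abs_mul]
    rcases hstrict with h | h
    · exact mul_lt_one_of_nonneg_of_lt_one_left (abs_nonneg _) (abs_div_sub_lt_one h)
        (abs_div_sub_le_one hVB)
    · exact mul_lt_one_of_nonneg_of_lt_one_right (abs_div_sub_le_one hVA) (abs_nonneg _)
        (abs_div_sub_lt_one h)
  rw [triArea, hX, hY, triangleArea_lineMap_lineMap]
  exact mul_lt_of_lt_one_left harea hst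

end Line

theorem stmt4_general (n : ℕ) (L : Fin n → Line)
    (i j k : Fin n) (hT : FormsTriangle (L i) (L j) (L k))
    (hmin : ∀ a b c : Fin n, FormsTriangle (L a) (L b) (L c) →
      triArea (L i) (L j) (L k) ≤ triArea (L a) (L b) (L c)) :
    ∀ m : Fin n, Line.pts (L m) ∩ openTriangle (L i) (L j) (L k) = ∅ := by
  intro m
  refine Set.eq_empty_of_forall_notMem fun x ⟨hxm, hx⟩ => ?_
  have harea := hT.triArea_pos
  obtain ⟨hij, hik, hjk, -⟩ := hT
  rcases (L m).cutsOff_of_mem_interior_convexHull hx (Line.mem_pts_iff.mp hxm) with h | h | h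
  · obtain ⟨hF, hlt⟩ := Line.triArea_lt_of_cutsOff hij (Line.eval_inter_left hik)
      (Line.eval_inter_left hjk) harea h
    exact (hmin i j m hF).not_gt hlt
  · obtain ⟨hF, hlt⟩ := Line.triArea_lt_of_cutsOff hik (Line.eval_inter_left hij)
      (Line.eval_inter_right hjk) (by rwa [triangleArea_swap]) h
    rw [triangleArea_swap] at hlt
    exact (hmin i k m hF).not_gt hlt
  · obtain ⟨hF, hlt⟩ := Line.triArea_lt_of_cutsOff hjk (Line.eval_inter_right hij)
      (Line.eval_inter_right hik) (by rwa [triangleArea_rotate]) h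
    rw [triangleArea_rotate] at hlt
    exact (hmin j k m hF).not_gt hlt

/-- In an arrangement of `n` lines, every minimum-area triangle is a face of the
arrangement: if the triangle formed by lines `i, j, k` has minimal area among
all triangles of the arrangement, then no line of the arrangement meets its
open interior. -/
theorem stmt4 (n : ℕ) (L : Fin n → Line) (hinj : Function.Injective L)
    (i j k : Fin n) (hT : FormsTriangle (L i) (L j) (L k))
    (hmin : ∀ a b c : Fin n, FormsTriangle (L a) (L b) (L c) →
      triArea (L i) (L j) (L k) ≤ triArea (L a) (L b) (L c)) :
    ∀ m : Fin n, Line.pts (L m) ∩ openTriangle (L i) (L j) (L k) = ∅ :=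
  stmt4_general n L i j k hT hmin
end

section
/- Let x₁, x₂, x₃ and y₁, y₂, y₃ be real numbers such that (x_i - x_j)² ≤ |y_i - y_j| for all pairs, and the sign of x_i - x_j equals the sign of y_i - y_j for all pairs with x_i ≠ x_j. If (x₁ - x₂)² = |y₁ - y₂| and (x₂ - x₃)² = |y₂ - y₃| with x₁ ≠ x₂ and x₂ ≠ x₃, then x₁ - x₂ and x₂ - x₃ have opposite signs. -/
/-- Let `x₁, x₂, x₃` and `y₁, y₂, y₃` be reals with `(x_i - x_j)² ≤ |y_i - y_j|`
for all pairs, and such that `x_i - x_j` and `y_i - y_j` have the same sign for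
all pairs with `x_i ≠ x_j`.  If `(x₁ - x₂)² = |y₁ - y₂|` and
`(x₂ - x₃)² = |y₂ - y₃|` with `x₁ ≠ x₂` and `x₂ ≠ x₃`, then `x₁ - x₂` and
`x₂ - x₃` have opposite signs. -/
theorem stmt7 (x₁ x₂ x₃ y₁ y₂ y₃ : ℝ)
    (h12 : (x₁ - x₂) ^ 2 ≤ |y₁ - y₂|)
    (h13 : (x₁ - x₃) ^ 2 ≤ |y₁ - y₃|)
    (h23 : (x₂ - x₃) ^ 2 ≤ |y₂ - y₃|)
    (s12 : x₁ ≠ x₂ → (0 < x₁ - x₂ ↔ 0 < y₁ - y₂))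
    (s13 : x₁ ≠ x₃ → (0 < x₁ - x₃ ↔ 0 < y₁ - y₃))
    (s23 : x₂ ≠ x₃ → (0 < x₂ - x₃ ↔ 0 < y₂ - y₃))
    (e12 : (x₁ - x₂) ^ 2 = |y₁ - y₂|)
    (e23 : (x₂ - x₃) ^ 2 = |y₂ - y₃|)
    (hx12 : x₁ ≠ x₂) (hx23 : x₂ ≠ x₃) :
    (x₁ - x₂) * (x₂ - x₃) < 0 := by
  by_contra h
  push_neg at h
  have ha : x₁ - x₂ ≠ 0 := sub_ne_zero.mpr hx12
  have hb : x₂ - x₃ ≠ 0 := sub_ne_zero.mpr hx23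
  have hab : 0 < (x₁ - x₂) * (x₂ - x₃) :=
    lt_of_le_of_ne h (Ne.symm (mul_ne_zero ha hb))
  rcases mul_pos_iff.mp hab with ⟨h1, h2⟩ | ⟨h1, h2⟩
  · -- both positive
    have hy12 : 0 < y₁ - y₂ := (s12 hx12).mp h1
    have hy23 : 0 < y₂ - y₃ := (s23 hx23).mp h2
    rw [abs_of_pos hy12] at e12
    rw [abs_of_pos hy23] at e23
    have h13' : (x₁ - x₃) ^ 2 ≤ y₁ - y₃ := by
      have : |y₁ - y₃| = y₁ - y₃ := abs_of_pos (by linarith)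
      linarith [this ▸ h13]
    nlinarith [mul_pos h1 h2]
  · -- both negative
    have hy12 : ¬ (0 < y₁ - y₂) := fun hc => absurd ((s12 hx12).mpr hc) (by linarith)
    have hy23 : ¬ (0 < y₂ - y₃) := fun hc => absurd ((s23 hx23).mpr hc) (by linarith)
    have hy12' : y₁ - y₂ < 0 := by
      rcases lt_trichotomy (y₁ - y₂) 0 with h' | h' | h'
      · exact h'
      · exfalso; rw [h', abs_zero] at e12; exact ha (pow_eq_zero_iff (n := 2) (by norm_num) |>.mp e12)
      · exact absurd h' hy12
    have hy23' : y₂ - y₃ < 0 := by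
      rcases lt_trichotomy (y₂ - y₃) 0 with h' | h' | h'
      · exact h'
      · exfalso; rw [h', abs_zero] at e23; exact hb (pow_eq_zero_iff (n := 2) (by norm_num) |>.mp e23)
      · exact absurd h' hy23
    rw [abs_of_neg hy12'] at e12
    rw [abs_of_neg hy23'] at e23
    have h13' : (x₁ - x₃) ^ 2 ≤ -(y₁ - y₃) := by
      have : |y₁ - y₃| = -(y₁ - y₃) := abs_of_neg (by linarith)
      linarith [this ▸ h13]
    nlinarith [mul_pos_of_neg_of_neg h1 h2]
end

section
/- Let G be a graph on vertices v₁, …, v_m, where vertex vᵢ carries real parameters (xᵢ, yᵢ), all xᵢ distinct and all yᵢ distinct, and suppose: (i) (x_i - x_j)² ≤ y_i - y_j whenever x_j < x_i (so y is order-isomorphic to x), and (ii) vᵢvⱼ is an edge exactly when (x_i - x_j)² = |y_i - y_j|. Then G contains no cycle; in particular G has at most m - 1 edges. -/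
/-!
An edge `ij` with `x i < x j` is tight: `y j - y i = (x j - x i)²`. Since `(s + t)² > s² + t²`
for `s, t > 0`, no vertex has neighbours on both sides of it. If every vertex of a finite nonempty
set `S` had two neighbours in `S`, let `c` be the leftmost vertex of `S` with a neighbour in `S` to
its left: its two neighbours `a < b` lie to its left, and a second neighbour `d` of `b` lies to the
right of `c`, which tightness of `ca`, `cb`, `bd` forbids. Hence `G` is a forest, and a forest lies
inside a spanning tree of the complete graph, which has `m - 1` edges.
-/

namespace SimpleGraph

variable {V : Type*} {G : SimpleGraph V}

lemma IsAcyclic.ncard_edgeSet_le [Finite V] (h : G.IsAcyclic) :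
    G.edgeSet.ncard ≤ Nat.card V - 1 := by
  cases isEmpty_or_nonempty V
  · simp [Set.eq_empty_of_isEmpty G.edgeSet]
  obtain ⟨F, hGF, -, hF⟩ := connected_top.exists_isTree_le_of_le_of_isAcyclic le_top h
  have hF_card := (isTree_iff_connected_and_card.1 hF).2
  rw [Nat.card_coe_set_eq] at hF_card
  have := Set.ncard_le_ncard (edgeSet_mono hGF)
  omega

lemma isAcyclic_of_forall_exists_subsingleton_neighborSet_inter
    (h : ∀ S : Set V, S.Finite → S.Nonempty → ∃ v ∈ S, (G.neighborSet v ∩ S).Subsingleton) :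
    G.IsAcyclic := by
  intro u c hc
  obtain ⟨v, hv, hsub⟩ := h {w | w ∈ c.support} c.support.finite_toSet ⟨u, c.start_mem_support⟩
  obtain ⟨a, b, hab, hnbr⟩ := Set.ncard_eq_two.1 (hc.ncard_neighborSet_toSubgraph_eq_two hv)
  have mem : ∀ w ∈ c.toSubgraph.neighborSet v, w ∈ G.neighborSet v ∩ {w | w ∈ c.support} :=
    fun w hw => ⟨hw.adj_sub, c.mem_verts_toSubgraph.1 hw.snd_mem⟩
  exact hab (hsub (mem a (by simp [hnbr])) (mem b (by simp [hnbr])))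

end SimpleGraph

section ParabolicGraph

variable {V : Type*} {x y : V → ℝ} {G : SimpleGraph V}

lemma sub_eq_sq_of_adj (hord : ∀ i j, x j < x i → (x i - x j) ^ 2 ≤ y i - y j)
    (hG : ∀ i j, G.Adj i j → (x i - x j) ^ 2 = |y i - y j|) {i j : V} (hij : G.Adj i j)
    (hlt : x i < x j) : y j - y i = (x j - x i) ^ 2 := by
  have hy : 0 ≤ y j - y i := (sq_nonneg _).trans (hord j i hlt)
  rw [← abs_of_nonneg hy, abs_sub_comm, ← hG i j hij, sub_sq_comm]

lemma lt_iff_lt_of_adj_of_adj (hx : Function.Injective x)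
    (hord : ∀ i j, x j < x i → (x i - x j) ^ 2 ≤ y i - y j)
    (htight : ∀ i j, G.Adj i j → x i < x j → y j - y i = (x j - x i) ^ 2)
    {u v w : V} (hu : G.Adj v u) (hw : G.Adj v w) : x u < x v ↔ x w < x v := by
  have key : ∀ {u w}, G.Adj v u → G.Adj v w → x u < x v → x w < x v := by
    intro u w hu hw hlt
    refine lt_of_le_of_ne (not_lt.1 fun hgt => ?_) (hx.ne hw.ne.symm)
    have h₁ := htight u v hu.symm hlt
    have h₂ := htight v w hw hgt
    have h₃ := hord w u (hlt.trans hgt)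
    nlinarith [mul_pos (sub_pos.2 hlt) (sub_pos.2 hgt)]
  exact ⟨key hu hw, key hw hu⟩

/-- For `x a < x b < x c < x d`, tightness of `ca`, `cb`, `bd` would give
`y d - y a = (x d - x a)² - 2 (x b - x a) (x d - x c)`. -/
lemma le_of_adj_of_adj_of_adj (hord : ∀ i j, x j < x i → (x i - x j) ^ 2 ≤ y i - y j)
    (htight : ∀ i j, G.Adj i j → x i < x j → y j - y i = (x j - x i) ^ 2)
    {a b c d : V} (hca : G.Adj c a) (hcb : G.Adj c b) (hbd : G.Adj b d)
    (hab : x a < x b) (hbc : x b < x c) : x d ≤ x c := by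
  refine not_lt.1 fun hcd => ?_
  have h₁ := htight a c hca.symm (hab.trans hbc)
  have h₂ := htight b c hcb.symm hbc
  have h₃ := htight b d hbd (hbc.trans hcd)
  have h₄ := hord d a (hab.trans (hbc.trans hcd))
  nlinarith [mul_pos (sub_pos.2 hab) (sub_pos.2 hcd)]

lemma exists_subsingleton_neighborSet_inter (hx : Function.Injective x)
    (hord : ∀ i j, x j < x i → (x i - x j) ^ 2 ≤ y i - y j)
    (htight : ∀ i j, G.Adj i j → x i < x j → y j - y i = (x j - x i) ^ 2)
    {S : Set V} (hS : S.Finite) (hne : S.Nonempty) :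
    ∃ v ∈ S, (G.neighborSet v ∩ S).Subsingleton := by
  by_contra! hnt
  set T := {v ∈ S | ∃ u ∈ G.neighborSet v ∩ S, x u < x v}
  have hT_ne : T.Nonempty := by
    obtain ⟨v, hvS, hv_max⟩ := Set.exists_max_image S x hS hne
    obtain ⟨u, hu, -⟩ := (hnt v hvS).exists_ne v
    exact ⟨v, hvS, u, hu, (hv_max u hu.2).lt_of_ne (hx.ne hu.1.ne.symm)⟩
  obtain ⟨c, ⟨hcS, u, hu, hu_lt⟩, hc_min⟩ :=
    Set.exists_min_image T x (hS.subset (Set.sep_subset _ _)) hT_ne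
  have zigzag : ∀ a ∈ G.neighborSet c ∩ S, ∀ b ∈ G.neighborSet c ∩ S, x a < x b → False := by
    rintro a ⟨hca, -⟩ b ⟨hcb, hbS⟩ hab
    have hbc : x b < x c := (lt_iff_lt_of_adj_of_adj hx hord htight hu.1 hcb).1 hu_lt
    obtain ⟨d, ⟨hbd, hdS⟩, hdc⟩ := (hnt b hbS).exists_ne c
    have hbd_lt : x b < x d := by
      refine lt_of_le_of_ne (not_lt.1 fun hdb => ?_) (hx.ne hbd.ne)
      exact hbc.not_gt ((lt_iff_lt_of_adj_of_adj hx hord htight hbd hcb.symm).1 hdb)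
    have hcd : x c ≤ x d := hc_min d ⟨hdS, b, ⟨hbd.symm, hbS⟩, hbd_lt⟩
    exact hdc (hx (le_antisymm (le_of_adj_of_adj_of_adj hord htight hca hcb hbd hab hbc) hcd))
  obtain ⟨a, ha, b, hb, hab⟩ := hnt c hcS
  rcases lt_or_gt_of_ne (hx.ne hab) with h | h
  · exact zigzag a ha b hb h
  · exact zigzag b hb a ha h

end ParabolicGraph

theorem stmt8_general (m : ℕ) (x y : Fin m → ℝ)
    (hx : Function.Injective x)
    (hord : ∀ i j, x j < x i → (x i - x j) ^ 2 ≤ y i - y j)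
    (G : SimpleGraph (Fin m))
    (hG : ∀ i j, G.Adj i j ↔ i ≠ j ∧ (x i - x j) ^ 2 = |y i - y j|) :
    G.IsAcyclic ∧ G.edgeSet.ncard ≤ m - 1 := by
  have hacyc : G.IsAcyclic :=
    SimpleGraph.isAcyclic_of_forall_exists_subsingleton_neighborSet_inter fun _ hS hne =>
      exists_subsingleton_neighborSet_inter hx hord
        (fun _ _ => sub_eq_sq_of_adj hord fun i j hij => ((hG i j).1 hij).2) hS hne
  exact ⟨hacyc, by simpa using hacyc.ncard_edgeSet_le⟩

/-- Let `G` be a graph on `m` vertices where vertex `i` carries real parameters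
`(x i, y i)`, with all `x i` distinct and all `y i` distinct, satisfying:
(i) `(x i - x j)² ≤ y i - y j` whenever `x j < x i` (so `y` is ordered like `x`),
and (ii) `i` and `j` are adjacent exactly when `(x i - x j)² = |y i - y j|`.
Then `G` contains no cycle; in particular `G` has at most `m - 1` edges. -/
theorem stmt8 (m : ℕ) (x y : Fin m → ℝ)
    (hx : Function.Injective x) (hy : Function.Injective y)
    (hord : ∀ i j, x j < x i → (x i - x j) ^ 2 ≤ y i - y j)
    (G : SimpleGraph (Fin m))
    (hG : ∀ i j, G.Adj i j ↔ i ≠ j ∧ (x i - x j) ^ 2 = |y i - y j|) :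
    G.IsAcyclic ∧ G.edgeSet.ncard ≤ m - 1 :=
  stmt8_general m x y hx hord G hG
end

section
/- Let ℓ₁ and ℓ₂ be two intersecting lines and λ ≥ 0. Among any family of lines in general position (no six tangent to a common conic, where a point is considered a degenerate conic and parallelism means tangency at infinity), at most 20 of them form a triangle of area exactly λ with ℓ₁ and ℓ₂. -/
open scoped Classical

/-- A family of lines is in general position if no six (distinct) of its
members are tangent to a common conic.  Dually, the tangent lines of a conic
(including the degenerate cases: a point, i.e. a pencil of concurrent lines,
and tangency at infinity, i.e. parallelism) are the lines whose coefficient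
triples `(a,b,c)` satisfy a common nonzero homogeneous quadratic equation; so
the condition says no nonzero quadratic form on coefficient space vanishes on
six distinct members of the family. -/
def NoSixTangentToConic (F : Finset Line) : Prop :=
  ¬ ∃ A B C D E G : ℝ, (A, B, C, D, E, G) ≠ (0, 0, 0, 0, 0, 0) ∧
    ∃ S : Finset Line, S ⊆ F ∧ S.card = 6 ∧
      ∀ l ∈ S, A * l.a ^ 2 + B * l.b ^ 2 + C * l.c ^ 2 +
        D * l.a * l.b + E * l.a * l.c + G * l.b * l.c = 0

/-!
The area of the triangle cut out by `g` from `ℓ₁, ℓ₂` is `Δ² / (2 |d₁₂ d₁ d₂|)`, where `Δ` is the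
determinant of the three coefficient triples and `dᵢ` are the direction determinants. Hence area
`λ` means `Δ² = ± 2λ|d₁₂| d₁ d₂`, the sign being that of `d₁ d₂`, i.e. the pair of opposite
quadrants containing the triangle. Each sign is a quadratic equation in the coefficients of `g`
whose `c²`-coefficient is `d₁₂² ≠ 0`, i.e. a (dual) conic, which carries at most five lines of the
family. So at most `10 ≤ 20` lines qualify.
-/

namespace Line

/-- In line coordinates, the zero set of this form is the set of tangents of a (possibly
degenerate) conic. -/
def conicForm (A B C D E G : ℝ) (l : Line) : ℝ :=
  A * l.a ^ 2 + B * l.b ^ 2 + C * l.c ^ 2 + D * l.a * l.b + E * l.a * l.c + G * l.b * l.c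

/-- Vanishes iff the three lines are concurrent or all parallel. -/
def det3 (L M N : Line) : ℝ :=
  N.a * (L.b * M.c - L.c * M.b) - N.b * (L.a * M.c - L.c * M.a) + N.c * lineDet L M

theorem lineDet_swap (L M : Line) : lineDet M L = -lineDet L M := by
  unfold lineDet; ring

theorem triArea_eq (L M N : Line) (hLM : lineDet L M ≠ 0) (hLN : lineDet L N ≠ 0)
    (hMN : lineDet M N ≠ 0) :
    triArea L M N = det3 L M N ^ 2 / (2 * |lineDet L M * lineDet L N * lineDet M N|) := by
  have signed_area : ((inter L N).1 - (inter L M).1) * ((inter M N).2 - (inter L M).2) -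
      ((inter M N).1 - (inter L M).1) * ((inter L N).2 - (inter L M).2) =
      det3 L M N ^ 2 / (lineDet L M * lineDet L N * lineDet M N) := by
    simp only [inter]
    field_simp
    simp only [det3, lineDet]
    ring
  rw [triArea, triangleArea, signed_area, abs_div, abs_pow, sq_abs, div_div, mul_comm]

theorem exists_conicForm_eq (L M : Line) (k : ℝ) :
    ∃ A B D E G : ℝ, ∀ g : Line, conicForm A B (lineDet L M ^ 2) D E G g =
      det3 L M g ^ 2 - k * lineDet L g * lineDet M g :=
  ⟨(L.b * M.c - L.c * M.b) ^ 2 - k * L.b * M.b, (L.a * M.c - L.c * M.a) ^ 2 - k * L.a * M.a,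
    -2 * (L.b * M.c - L.c * M.b) * (L.a * M.c - L.c * M.a) + k * (L.a * M.b + M.a * L.b),
    2 * (L.b * M.c - L.c * M.b) * lineDet L M, -2 * (L.a * M.c - L.c * M.a) * lineDet L M,
    fun g => by simp only [conicForm, det3, lineDet]; ring⟩

end Line

theorem NoSixTangentToConic.card_filter_le_five {F : Finset Line} (hgen : NoSixTangentToConic F)
    {A B C D E G : ℝ} (hne : (A, B, C, D, E, G) ≠ (0, 0, 0, 0, 0, 0)) :
    (F.filter (fun l => Line.conicForm A B C D E G l = 0)).card ≤ 5 := by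
  by_contra! h
  obtain ⟨S, hS, hcard⟩ := Finset.exists_subset_card_eq h
  exact hgen ⟨A, B, C, D, E, G, hne, S, hS.trans (Finset.filter_subset _ _), hcard,
    fun l hl => (Finset.mem_filter.mp (hS hl)).2⟩

theorem NoSixTangentToConic.card_filter_det3_sq_le_five {F : Finset Line}
    (hgen : NoSixTangentToConic F) {L M : Line} (hLM : Line.lineDet L M ≠ 0) (k : ℝ) :
    (F.filter (fun g => Line.det3 L M g ^ 2 = k * Line.lineDet L g * Line.lineDet M g)).card
      ≤ 5 := by
  obtain ⟨A, B, D, E, G, hform⟩ := Line.exists_conicForm_eq L M k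
  have hne : (A, B, Line.lineDet L M ^ 2, D, E, G) ≠ (0, 0, 0, 0, 0, 0) := by
    simp only [ne_eq, Prod.mk.injEq, pow_eq_zero_iff two_ne_zero, hLM, false_and, and_false,
      not_false_eq_true]
  refine le_trans (Finset.card_le_card fun g hg => ?_) (hgen.card_filter_le_five hne)
  rw [Finset.mem_filter] at hg ⊢
  exact ⟨hg.1, by rw [hform, hg.2, sub_self]⟩

theorem det3_sq_eq_of_triArea_eq {L M N : Line} (hLM : Line.lineDet L M ≠ 0)
    (hLN : Line.lineDet L N ≠ 0) (hMN : Line.lineDet M N ≠ 0) {lam : ℝ}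
    (harea : triArea L M N = lam) :
    ∃ s ∈ ({1, -1} : Set ℝ), Line.det3 L M N ^ 2 =
      s * (2 * lam * |Line.lineDet L M|) * Line.lineDet L N * Line.lineDet M N := by
  rw [Line.triArea_eq L M N hLM hLN hMN, div_eq_iff (by positivity)] at harea
  rcases abs_choice (Line.lineDet L N * Line.lineDet M N) with hs | hs
  · exact ⟨1, by simp, by rw [harea, mul_assoc, abs_mul, hs]; ring⟩
  · exact ⟨-1, by simp, by rw [harea, mul_assoc, abs_mul, hs]; ring⟩

theorem stmt12_general (l₁ l₂ : Line) (hint : ¬ Line.Parallel l₁ l₂)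
    (lam : ℝ) (F : Finset Line) (hgen : NoSixTangentToConic F) :
    (F.filter (fun g => ¬ Line.Parallel g l₁ ∧ ¬ Line.Parallel g l₂ ∧
      triArea l₁ l₂ g = lam)).card ≤ 20 := by
  set K := 2 * lam * |Line.lineDet l₁ l₂|
  let onConic (s : ℝ) : Finset Line :=
    F.filter (fun g => Line.det3 l₁ l₂ g ^ 2 = s * K * Line.lineDet l₁ g * Line.lineDet l₂ g)
  have hsub : F.filter (fun g => ¬ Line.Parallel g l₁ ∧ ¬ Line.Parallel g l₂ ∧
      triArea l₁ l₂ g = lam) ⊆ onConic 1 ∪ onConic (-1) := by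
    intro g hg
    obtain ⟨hgF, hg₁, hg₂, harea⟩ := Finset.mem_filter.mp hg
    have h₁ : Line.lineDet l₁ g ≠ 0 := by rw [Line.lineDet_swap]; exact neg_ne_zero.mpr hg₁
    have h₂ : Line.lineDet l₂ g ≠ 0 := by rw [Line.lineDet_swap]; exact neg_ne_zero.mpr hg₂
    obtain ⟨s, hs, heq⟩ := det3_sq_eq_of_triArea_eq hint h₁ h₂ harea
    rcases hs with rfl | rfl
    · exact Finset.mem_union_left _ (Finset.mem_filter.mpr ⟨hgF, heq⟩)
    · exact Finset.mem_union_right _ (Finset.mem_filter.mpr ⟨hgF, heq⟩)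
  calc _ ≤ (onConic 1 ∪ onConic (-1)).card := Finset.card_le_card hsub
    _ ≤ (onConic 1).card + (onConic (-1)).card := Finset.card_union_le _ _
    _ ≤ 5 + 5 := add_le_add (hgen.card_filter_det3_sq_le_five hint _)
        (hgen.card_filter_det3_sq_le_five hint _)
    _ ≤ 20 := by norm_num

/-- Let `ℓ₁` and `ℓ₂` be two intersecting lines and `λ ≥ 0`.  In any family of
lines in general position (no six tangent to a common conic, a point counting
as a degenerate conic and parallelism as tangency at infinity), at most `20`
members form a triangle of area exactly `λ` with `ℓ₁` and `ℓ₂` (area `0`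
meaning the three lines are concurrent). -/
theorem stmt12 (l₁ l₂ : Line) (hint : ¬ Line.Parallel l₁ l₂)
    (lam : ℝ) (hlam : 0 ≤ lam) (F : Finset Line) (hgen : NoSixTangentToConic F) :
    (F.filter (fun g => ¬ Line.Parallel g l₁ ∧ ¬ Line.Parallel g l₂ ∧
      triArea l₁ l₂ g = lam)).card ≤ 20 :=
  stmt12_general l₁ l₂ hint lam F hgen
end

section
/- Let H be the complete 3-uniform hypergraph on a vertex set V of size n, with a colouring of its triples such that for every pair of vertices, at most k triples containing that pair have any given colour. Then there exists a subset S ⊆ V of size Ω_k(n^{1/5}) such that all triples inside S receive pairwise distinct colours. -/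
/-! The deletion method. If `t₁ ≠ t₂` are equally coloured triples, then `u = |t₁ ∪ t₂|` lies in
`{4, 5, 6}`, and since `t₁` together with two vertices of `t₂` leaves at most `k` choices for `t₂`,
there are `O(k n^(u-1))` such pairs. A uniformly random `m`-set contains a fixed `u`-set with
probability at most `(2m/n)^u`, so it contains `O(k m^6 / n)` such pairs on average, at most `m/6`
once `n ≥ c_k m^5`. Removing one triple of each of them leaves a rainbow set of at least `m/2`
vertices, and `m ≈ (n / c_k)^(1/5)`. -/

open scoped Classical

open Finset

section

variable {V α : Type*} [Fintype V] [DecidableEq V]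

def IsLocallyBounded (χ : Finset V → α) (k : ℕ) : Prop :=
  ∀ i j : V, i ≠ j → ∀ a : α, #{t ∈ univ.powersetCard 3 | i ∈ t ∧ j ∈ t ∧ χ t = a} ≤ k

def IsRainbow (χ : Finset V → α) (S : Finset V) : Prop :=
  ∀ t₁ ∈ S.powersetCard 3, ∀ t₂ ∈ S.powersetCard 3, χ t₁ = χ t₂ → t₁ = t₂

noncomputable def monoPairs (χ : Finset V → α) : Finset (Finset V × Finset V) :=
  {p ∈ univ.powersetCard 3 ×ˢ univ.powersetCard 3 | p.1 ≠ p.2 ∧ χ p.1 = χ p.2}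

variable {χ : Finset V → α} {k : ℕ}

lemma mem_monoPairs {p : Finset V × Finset V} :
    p ∈ monoPairs χ ↔ #p.1 = 3 ∧ #p.2 = 3 ∧ p.1 ≠ p.2 ∧ χ p.1 = χ p.2 := by
  simp [monoPairs, mem_powersetCard, and_assoc]

lemma card_union_mem_Icc_of_mem_monoPairs {p : Finset V × Finset V} (hp : p ∈ monoPairs χ) :
    #(p.1 ∪ p.2) ∈ Icc 4 6 := by
  obtain ⟨h₁, h₂, hne, -⟩ := mem_monoPairs.1 hp
  have hsum : #(p.1 ∪ p.2) + #(p.1 ∩ p.2) = 6 := by rw [card_union_add_card_inter, h₁, h₂]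
  have hinter : #(p.1 ∩ p.2) ≤ 2 := by
    by_contra! h
    have h₁₂ : p.1 ∩ p.2 = p.1 := eq_of_subset_of_card_le inter_subset_left (by omega)
    exact hne (eq_of_subset_of_card_le (h₁₂ ▸ inter_subset_right) (by omega))
  exact mem_Icc.2 ⟨by omega, by omega⟩

omit [DecidableEq V] in
lemma card_powersetCard_univ_le (r : ℕ) :
    #(univ.powersetCard r : Finset (Finset V)) ≤ Fintype.card V ^ r := by
  simpa using Nat.choose_le_pow (Fintype.card V) r

/-- Given `t₁` and two distinct vertices of `t₂`, local boundedness leaves at most `k` choices for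
`t₂`; here those two vertices are drawn from `f t₁ × g t₁`. -/
lemma card_le_of_subset_monoPairs (hχ : IsLocallyBounded χ k)
    {B : Finset (Finset V × Finset V)} (hB : B ⊆ monoPairs χ) (f g : Finset V → Finset V)
    {c : ℕ} (hc : ∀ t ∈ univ.powersetCard 3, #(f t) * #(g t) ≤ c)
    (hw : ∀ p ∈ B, ∃ a ∈ f p.1, ∃ b ∈ g p.1, a ≠ b ∧ a ∈ p.2 ∧ b ∈ p.2) :
    #B ≤ Fintype.card V ^ 3 * c * k := by
  let I := (univ.powersetCard 3).biUnion fun t => {t} ×ˢ f t ×ˢ g t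
  let r : Finset V × Finset V → Finset V × V × V → Prop :=
    fun p q => p.1 = q.1 ∧ q.2.1 ≠ q.2.2 ∧ q.2.1 ∈ p.2 ∧ q.2.2 ∈ p.2
  have hI : #I ≤ Fintype.card V ^ 3 * c :=
    calc #I ≤ ∑ t ∈ univ.powersetCard 3, #({t} ×ˢ f t ×ˢ g t) := card_biUnion_le
      _ ≤ ∑ _t ∈ univ.powersetCard 3, c :=
          sum_le_sum fun t ht => by simpa only [card_product, card_singleton, one_mul] using hc t ht
      _ ≤ Fintype.card V ^ 3 * c := by
          rw [sum_const, smul_eq_mul]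
          exact Nat.mul_le_mul_right c (card_powersetCard_univ_le 3)
  have hcover : ∀ p ∈ B, 1 ≤ #(I.bipartiteAbove r p) := by
    intro p hp
    obtain ⟨a, ha, b, hb, hab, ha₂, hb₂⟩ := hw p hp
    refine card_pos.2 ⟨(p.1, a, b), (mem_bipartiteAbove r).2 ⟨?_, rfl, hab, ha₂, hb₂⟩⟩
    exact mem_biUnion.2 ⟨p.1, (mem_monoPairs.1 (hB hp)).1 ▸ by simp [mem_powersetCard],
      by simp [ha, hb]⟩
  have hfiber : ∀ q ∈ I, #(B.bipartiteBelow r q) ≤ k := by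
    rintro ⟨t, a, b⟩ -
    rcases eq_or_ne a b with rfl | hab
    · simp [bipartiteBelow, r]
    refine (card_le_card_of_injOn Prod.snd (fun p hp => ?_) fun p hp p' hp' h => ?_).trans
      (hχ a b hab (χ t))
    · obtain ⟨hpB, rfl, hab, ha, hb⟩ := (mem_bipartiteBelow r).1 hp
      obtain ⟨-, h₂, -, hcol⟩ := mem_monoPairs.1 (hB hpB)
      simpa [mem_powersetCard, h₂, ha, hb] using hcol.symm
    · obtain ⟨-, hp₁, -⟩ := (mem_bipartiteBelow r).1 hp
      obtain ⟨-, hp₁', -⟩ := (mem_bipartiteBelow r).1 hp'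
      exact Prod.ext (hp₁.trans hp₁'.symm) h
  calc #B = #B * 1 := (mul_one _).symm
    _ ≤ #I * k := card_mul_le_card_mul r hcover hfiber
    _ ≤ Fintype.card V ^ 3 * c * k := Nat.mul_le_mul_right k hI

lemma card_filter_monoPairs_card_union_le (hχ : IsLocallyBounded χ k) (u : ℕ) :
    #{p ∈ monoPairs χ | #(p.1 ∪ p.2) = u} ≤ 9 * k * Fintype.card V ^ (u - 1) := by
  have hsub : {p ∈ monoPairs χ | #(p.1 ∪ p.2) = u} ⊆ monoPairs χ := filter_subset _ _
  have hsizes : ∀ p ∈ {p ∈ monoPairs χ | #(p.1 ∪ p.2) = u},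
      #(p.1 ∪ p.2) = u ∧ #(p.1 ∪ p.2) + #(p.1 ∩ p.2) = 6 ∧ #p.2 = 3 := fun p hp => by
    obtain ⟨h₁, h₂, -⟩ := mem_monoPairs.1 (hsub hp)
    exact ⟨(mem_filter.1 hp).2, by rw [card_union_add_card_inter, h₁, h₂], h₂⟩
  obtain rfl | rfl | rfl | hu : u = 4 ∨ u = 5 ∨ u = 6 ∨ u ∉ Icc 4 6 := by
    simp only [mem_Icc]; omega
  · refine (card_le_of_subset_monoPairs hχ hsub id id (c := 9)
      (fun t ht => by simp [(mem_powersetCard.1 ht).2]) fun p hp => ?_).trans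
      (by ring_nf; exact le_rfl)
    obtain ⟨a, b, hab, hins⟩ := (card_eq_two (s := p.1 ∩ p.2)).1 (by have := hsizes p hp; omega)
    have ha : a ∈ p.1 ∩ p.2 := hins ▸ by simp
    have hb : b ∈ p.1 ∩ p.2 := hins ▸ by simp
    exact ⟨a, (mem_inter.1 ha).1, b, (mem_inter.1 hb).1, hab, (mem_inter.1 ha).2,
      (mem_inter.1 hb).2⟩
  · refine (card_le_of_subset_monoPairs hχ hsub id (fun _ => univ) (c := 3 * Fintype.card V)
      (fun t ht => by simp [(mem_powersetCard.1 ht).2]) fun p hp => ?_).trans ?_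
    · obtain ⟨a, ha⟩ := (card_eq_one (s := p.1 ∩ p.2)).1 (by have := hsizes p hp; omega)
      obtain ⟨b, hb⟩ : (p.2 \ p.1).Nonempty := by
        have := card_sdiff_add_card_inter p.2 p.1
        rw [inter_comm] at this
        rw [← card_pos]; have := hsizes p hp; omega
      have ha' : a ∈ p.1 ∩ p.2 := ha ▸ mem_singleton_self a
      exact ⟨a, (mem_inter.1 ha').1, b, mem_univ b,
        fun h => (mem_sdiff.1 hb).2 (h ▸ (mem_inter.1 ha').1), (mem_inter.1 ha').2,
        (mem_sdiff.1 hb).1⟩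
    · norm_num; nlinarith [Nat.zero_le (k * Fintype.card V ^ 4)]
  · refine (card_le_of_subset_monoPairs hχ hsub (fun _ => univ) (fun _ => univ)
      (c := Fintype.card V ^ 2) (fun t _ => by simp [sq]) fun p hp => ?_).trans ?_
    · obtain ⟨a, b, c, hab, -, -, hins⟩ := card_eq_three.1 (hsizes p hp).2.2
      exact ⟨a, mem_univ a, b, mem_univ b, hab, hins ▸ by simp, hins ▸ by simp⟩
    · norm_num; nlinarith [Nat.zero_le (k * Fintype.card V ^ 5)]
  · rw [card_eq_zero.2 (filter_eq_empty_iff.2 fun p hp (hpu : #(p.1 ∪ p.2) = u) =>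
      hu (hpu ▸ card_union_mem_Icc_of_mem_monoPairs hp))]
    exact Nat.zero_le _

omit [Fintype V] in
lemma card_filter_superset_le_choose (s A : Finset V) (m : ℕ) :
    #{S ∈ s.powersetCard m | A ⊆ S} ≤ (#s - #A).choose (m - #A) := by
  by_cases hAs : A ⊆ s
  · calc #{S ∈ s.powersetCard m | A ⊆ S} ≤ #((s \ A).powersetCard (m - #A)) := by
          refine card_le_card_of_injOn (· \ A) (fun S hS => ?_) fun S hS S' hS' h => ?_
          · obtain ⟨hSm, hAS⟩ := mem_filter.1 hS
            obtain ⟨hSs, rfl⟩ := mem_powersetCard.1 hSm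
            simpa [mem_powersetCard, card_sdiff_of_subset hAS] using sdiff_subset_sdiff hSs le_rfl
          · rw [← sdiff_union_of_subset (mem_filter.1 hS).2,
              ← sdiff_union_of_subset (mem_filter.1 hS').2]
            exact congrArg (· ∪ A) h
      _ = (#s - #A).choose (m - #A) := by rw [card_powersetCard, card_sdiff_of_subset hAs]
  · rw [card_eq_zero.2 (filter_eq_empty_iff.2 fun S hS (hAS : A ⊆ S) =>
      hAs (hAS.trans (mem_powersetCard.1 hS).1))]
    exact Nat.zero_le _

lemma card_filter_superset_mul_pow_le (A : Finset V) (m : ℕ)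
    (hA : 2 * #A ≤ Fintype.card V + 2) :
    #{S ∈ univ.powersetCard m | A ⊆ S} * Fintype.card V ^ #A
      ≤ (Fintype.card V).choose m * (2 * m) ^ #A := by
  set n := Fintype.card V
  set u := #A
  have hdesc : #{S ∈ univ.powersetCard m | A ⊆ S} * n.descFactorial u
      ≤ n.choose m * m.descFactorial u := by
    by_cases hum : u ≤ m
    · calc #{S ∈ univ.powersetCard m | A ⊆ S} * n.descFactorial u
          ≤ (n - u).choose (m - u) * n.descFactorial u := by
            gcongr; simpa using card_filter_superset_le_choose univ A m
        _ = n.choose m * m.descFactorial u := by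
            simp only [Nat.descFactorial_eq_factorial_mul_choose]
            rw [mul_left_comm, mul_comm ((n - u).choose _), ← Nat.choose_mul hum]
            ring
    · rw [card_eq_zero.2 (filter_eq_empty_iff.2 fun S hS (hAS : A ⊆ S) =>
        hum ((card_le_card hAS).trans (mem_powersetCard.1 hS).2.le)), zero_mul]
      exact Nat.zero_le _
  calc #{S ∈ univ.powersetCard m | A ⊆ S} * n ^ u
      ≤ #{S ∈ univ.powersetCard m | A ⊆ S} * (2 ^ u * n.descFactorial u) := by
        gcongr
        calc n ^ u ≤ (2 * (n + 1 - u)) ^ u := Nat.pow_le_pow_left (by omega) u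
          _ = 2 ^ u * (n + 1 - u) ^ u := mul_pow _ _ _
          _ ≤ 2 ^ u * n.descFactorial u := by gcongr; exact Nat.pow_sub_le_descFactorial n u
    _ ≤ 2 ^ u * (n.choose m * m.descFactorial u) := by
        rw [mul_left_comm]; exact Nat.mul_le_mul_left _ hdesc
    _ ≤ n.choose m * (2 * m) ^ u := by
        rw [mul_pow, mul_left_comm]; gcongr; exact Nat.descFactorial_le_pow m u

omit [Fintype V] [DecidableEq V] in
lemma isRainbow_of_card_le_two {S : Finset V} (hS : #S ≤ 2) : IsRainbow χ S := by
  intro t₁ ht₁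
  have := card_le_card (mem_powersetCard.1 ht₁).1
  have := (mem_powersetCard.1 ht₁).2
  omega

lemma exists_isRainbow_subset (S : Finset V) :
    ∃ R ⊆ S, IsRainbow χ R ∧ #S ≤ #R + 3 * #{p ∈ monoPairs χ | p.1 ∪ p.2 ⊆ S} := by
  set F := {p ∈ monoPairs χ | p.1 ∪ p.2 ⊆ S}
  set D := F.biUnion Prod.fst
  have hD : #D ≤ 3 * #F :=
    calc #D ≤ ∑ p ∈ F, #p.1 := card_biUnion_le
      _ = ∑ _p ∈ F, 3 := sum_congr rfl fun p hp => (mem_monoPairs.1 (mem_filter.1 hp).1).1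
      _ = 3 * #F := by rw [sum_const, smul_eq_mul, mul_comm]
  refine ⟨S \ D, sdiff_subset, fun t₁ ht₁ t₂ ht₂ hχ => ?_, ?_⟩
  · obtain ⟨h₁R, h₁⟩ := mem_powersetCard.1 ht₁
    obtain ⟨h₂R, h₂⟩ := mem_powersetCard.1 ht₂
    by_contra hne
    have hF : (t₁, t₂) ∈ F := mem_filter.2 ⟨mem_monoPairs.2 ⟨h₁, h₂, hne, hχ⟩,
      union_subset (h₁R.trans sdiff_subset) (h₂R.trans sdiff_subset)⟩
    obtain ⟨v, hv⟩ := card_pos.1 (h₁ ▸ three_pos : 0 < #t₁)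
    exact (mem_sdiff.1 (h₁R hv)).2 (mem_biUnion.2 ⟨_, hF, hv⟩)
  · have := card_le_card_sdiff_add_card (s := S) (t := D)
    omega

lemma sum_card_filter_superset_mul_le (hχ : IsLocallyBounded χ k) {m u : ℕ} (hm : 1 ≤ m)
    (hn : 10 ≤ Fintype.card V) (hu : u ∈ Icc 4 6) :
    (∑ p ∈ monoPairs χ with #(p.1 ∪ p.2) = u, #{S ∈ univ.powersetCard m | p.1 ∪ p.2 ⊆ S})
        * Fintype.card V ≤ 576 * k * (Fintype.card V).choose m * m ^ 6 := by
  set n := Fintype.card V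
  obtain ⟨hu₄, hu₆⟩ := mem_Icc.1 hu
  have hpos : 0 < n ^ (u - 1) := by positivity
  have hsum : (∑ p ∈ monoPairs χ with #(p.1 ∪ p.2) = u,
      #{S ∈ univ.powersetCard m | p.1 ∪ p.2 ⊆ S}) * n ^ u
        ≤ #{p ∈ monoPairs χ | #(p.1 ∪ p.2) = u} * (n.choose m * (2 * m) ^ u) := by
    rw [sum_mul, ← smul_eq_mul, ← sum_const]
    refine sum_le_sum fun p hp => ?_
    have := card_filter_superset_mul_pow_le (p.1 ∪ p.2) m (by rw [(mem_filter.1 hp).2]; omega)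
    rwa [(mem_filter.1 hp).2] at this
  refine Nat.le_of_mul_le_mul_right (c := n ^ (u - 1)) ?_ hpos
  calc _ = (∑ p ∈ monoPairs χ with #(p.1 ∪ p.2) = u,
        #{S ∈ univ.powersetCard m | p.1 ∪ p.2 ⊆ S}) * n ^ u := by
        rw [mul_assoc, ← pow_succ', Nat.sub_add_cancel (by omega)]
    _ ≤ 9 * k * n ^ (u - 1) * (n.choose m * (2 * m) ^ u) :=
        hsum.trans (Nat.mul_le_mul_right _ (card_filter_monoPairs_card_union_le hχ u))
    _ ≤ 9 * k * n ^ (u - 1) * (n.choose m * (2 * m) ^ 6) := by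
        gcongr; omega
    _ = 576 * k * n.choose m * m ^ 6 * n ^ (u - 1) := by ring

lemma exists_card_filter_monoPairs_subset_mul_le (hχ : IsLocallyBounded χ k) {m : ℕ}
    (hm : 1 ≤ m) (hmn : m ≤ Fintype.card V) (hn : 10 ≤ Fintype.card V) :
    ∃ S ∈ univ.powersetCard m,
      #{p ∈ monoPairs χ | p.1 ∪ p.2 ⊆ S} * Fintype.card V ≤ 1728 * k * m ^ 6 := by
  set n := Fintype.card V
  have hdouble : ∑ S ∈ univ.powersetCard m, #{p ∈ monoPairs χ | p.1 ∪ p.2 ⊆ S}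
      = ∑ p ∈ monoPairs χ, #{S ∈ univ.powersetCard m | p.1 ∪ p.2 ⊆ S} :=
    sum_card_bipartiteAbove_eq_sum_card_bipartiteBelow fun S (p : Finset V × Finset V) =>
      p.1 ∪ p.2 ⊆ S
  have hfiber : ∑ p ∈ monoPairs χ, #{S ∈ univ.powersetCard m | p.1 ∪ p.2 ⊆ S}
      = ∑ u ∈ Icc 4 6, ∑ p ∈ monoPairs χ with #(p.1 ∪ p.2) = u,
          #{S ∈ univ.powersetCard m | p.1 ∪ p.2 ⊆ S} :=
    (sum_fiberwise_of_maps_to fun p hp => card_union_mem_Icc_of_mem_monoPairs hp) _ |>.symm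
  refine exists_le_of_sum_le (powersetCard_nonempty.2 (by simpa using hmn)) ?_
  calc ∑ S ∈ univ.powersetCard m, #{p ∈ monoPairs χ | p.1 ∪ p.2 ⊆ S} * n
      = ∑ u ∈ Icc 4 6, (∑ p ∈ monoPairs χ with #(p.1 ∪ p.2) = u,
          #{S ∈ univ.powersetCard m | p.1 ∪ p.2 ⊆ S}) * n := by
        rw [← sum_mul, hdouble, hfiber, sum_mul]
    _ ≤ ∑ _u ∈ Icc 4 6, 576 * k * n.choose m * m ^ 6 :=
        sum_le_sum fun u hu => sum_card_filter_superset_mul_le hχ hm hn hu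
    _ = ∑ _S ∈ univ.powersetCard m, 1728 * k * m ^ 6 := by
        simp only [sum_const, card_powersetCard, card_univ, Nat.card_Icc, smul_eq_mul]
        ring

lemma exists_isRainbow_of_pow_le (hχ : IsLocallyBounded χ k) {m : ℕ} (hm : 1 ≤ m)
    (hmn : 10368 * (k + 1) * m ^ 5 ≤ Fintype.card V) :
    ∃ R : Finset V, IsRainbow χ R ∧ m ≤ 2 * #R := by
  set n := Fintype.card V
  have hm5 : 1 ≤ m ^ 5 := Nat.one_le_pow _ _ hm
  have hmm5 : m ≤ m ^ 5 := Nat.le_self_pow (by norm_num) m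
  obtain ⟨S, hS, hbad⟩ :=
    exists_card_filter_monoPairs_subset_mul_le hχ hm (by nlinarith) (by nlinarith)
  obtain ⟨R, -, hR, hSR⟩ := exists_isRainbow_subset (χ := χ) S
  set b := #{p ∈ monoPairs χ | p.1 ∪ p.2 ⊆ S}
  have hb : 6 * b ≤ m := by
    have : (6 * b) * (1728 * (k + 1) * m ^ 5) ≤ m * (1728 * (k + 1) * m ^ 5) :=
      calc (6 * b) * (1728 * (k + 1) * m ^ 5) = b * (10368 * (k + 1) * m ^ 5) := by ring
        _ ≤ b * n := Nat.mul_le_mul_left b hmn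
        _ ≤ 1728 * k * m ^ 6 := hbad
        _ ≤ m * (1728 * (k + 1) * m ^ 5) := by
            rw [show m * (1728 * (k + 1) * m ^ 5) = 1728 * (k + 1) * m ^ 6 by ring]; gcongr; omega
    exact Nat.le_of_mul_le_mul_right this (by positivity)
  exact ⟨R, hR, by rw [(mem_powersetCard.1 hS).2] at hSR; omega⟩

end

/-- Rainbow Ramsey theorem for 3-uniform hypergraphs: for every `k` there is a
constant `C > 0` such that the following holds for every `n`.  If the triples
of an `n`-element vertex set are coloured so that for every pair of distinct
vertices at most `k` triples containing that pair receive any given colour,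
then there is a set `S` of at least `C·n^{1/5}` vertices such that all triples
inside `S` receive pairwise distinct colours. -/
theorem stmt14 (k : ℕ) :
    ∃ C : ℝ, 0 < C ∧
      ∀ (n : ℕ) (α : Type) (χ : Finset (Fin n) → α),
        (∀ i j : Fin n, i ≠ j → ∀ a : α,
          ((Finset.univ.powersetCard 3).filter
            (fun t : Finset (Fin n) => i ∈ t ∧ j ∈ t ∧ χ t = a)).card ≤ k) →
        ∃ S : Finset (Fin n), C * (n : ℝ) ^ ((1 : ℝ) / 5) ≤ S.card ∧
          ∀ t₁ ∈ S.powersetCard 3, ∀ t₂ ∈ S.powersetCard 3,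
            χ t₁ = χ t₂ → t₁ = t₂ := by
  set K : ℝ := 10368 * (k + 1)
  have hK : 0 < K := by positivity
  refine ⟨(1 / K) ^ ((1 : ℝ) / 5) / 4, by positivity, fun n α χ hχ => ?_⟩
  set x := ((n : ℝ) / K) ^ ((1 : ℝ) / 5)
  have hx : (1 / K) ^ ((1 : ℝ) / 5) / 4 * (n : ℝ) ^ ((1 : ℝ) / 5) = x / 4 := by
    rw [div_mul_eq_mul_div, ← Real.mul_rpow (by positivity) (by positivity), one_div_mul_eq_div]
  rw [hx]
  rcases le_or_gt 1 x with hx₁ | hx₁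
  · set m := ⌊x⌋₊
    have hm : 1 ≤ m := Nat.one_le_floor_iff x |>.2 hx₁
    have hmx : (m : ℝ) ≤ x := Nat.floor_le (by positivity)
    have hx5 : x ^ 5 = n / K := by
      rw [← Real.rpow_natCast, ← Real.rpow_mul (by positivity)]; norm_num
    have hKm : 10368 * (k + 1) * m ^ 5 ≤ Fintype.card (Fin n) := by
      have : K * (m : ℝ) ^ 5 ≤ n := by
        rw [← le_div_iff₀' hK, ← hx5]; gcongr
      rw [Fintype.card_fin, ← Nat.cast_le (α := ℝ)]; push_cast; exact this
    obtain ⟨R, hR, hmR⟩ := exists_isRainbow_of_pow_le hχ hm hKm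
    refine ⟨R, ?_, hR⟩
    have : x < m + 1 := Nat.lt_floor_add_one x
    have : (m : ℝ) ≤ 2 * #R := by exact_mod_cast hmR
    have : (1 : ℝ) ≤ m := by exact_mod_cast hm
    linarith
  · rcases Nat.eq_zero_or_pos n with rfl | hn
    · refine ⟨∅, by simp [x], isRainbow_of_card_le_two (by simp)⟩
    · refine ⟨{⟨0, hn⟩}, by rw [card_singleton]; push_cast; linarith,
        isRainbow_of_card_le_two (by simp)⟩
end
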